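/- arXiv:2203.15920 — 3 statements merged into one kernel-verified Lean document; each statement's English description precedes it below -/
import Mathlib

section
/- For every integer r ≥ 0, (1/π) ∫_{-1}^{1} 𝒥_r^{(1/2,-1/2)}(x) (1-x)^{-1/2} (1+x)^{-1/2} dx = 1. -/
/-!
The normalized Jacobi polynomials `𝒥_k^{(a,b)} = J_k^{(a,b)}/c_k` with
`c_k = (1·3···(2k-1))/(2·4···(2k))` (and `c_0 = 1`), for the parameter pairs
`(a,b) = (-1/2,-1/2)` and `(1/2,-1/2)`, are given explicitly by Chebyshev
polynomials: `𝒥_k^{(-1/2,-1/2)}(cos θ) = cos (kθ)` is the Chebyshev polynomial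
of the first kind `T_k`, and `𝒥_k^{(1/2,-1/2)}(cos θ) = sin((k+1/2)θ)/sin(θ/2)`
is the Chebyshev polynomial of the fourth kind `W_k = U_k + U_{k-1}`.
We take these explicit expressions as the definitions.
-/

/-- The normalized Jacobi polynomial `𝒥_k^{(-1/2,-1/2)} = J_k^{(-1/2,-1/2)}/c_k`,
i.e. the Chebyshev polynomial of the first kind. -/
noncomputable def JacobiNormMinus (k : ℕ) (x : ℝ) : ℝ :=
  (Polynomial.Chebyshev.T ℝ k).eval x

/-- The normalized Jacobi polynomial `𝒥_k^{(1/2,-1/2)} = J_k^{(1/2,-1/2)}/c_k`,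
i.e. the Chebyshev polynomial of the fourth kind `U_k + U_{k-1}`. -/
noncomputable def JacobiNormPlus (k : ℕ) (x : ℝ) : ℝ :=
  (Polynomial.Chebyshev.U ℝ k).eval x + (Polynomial.Chebyshev.U ℝ ((k : ℤ) - 1)).eval x

/-- The weight `W^{(a,-1/2)}(k)`: equal to `2` if `a = -1/2` and `k > 0`,
and to `1` otherwise. -/
noncomputable def Wwt (a : ℝ) (k : ℕ) : ℝ :=
  if a = -1/2 ∧ 0 < k then 2 else 1

open Real MeasureTheory Set intervalIntegral Polynomial.Chebyshev

private lemma weight_eq {x : ℝ} (h1 : -1 < x) (h2 : x < 1) :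
    (1 - x) ^ (-(1/2) : ℝ) * (1 + x) ^ (-(1/2) : ℝ) = (Real.sqrt (1 - x ^ 2))⁻¹ := by
  have ha : (0:ℝ) < 1 - x := by linarith
  have hb : (0:ℝ) < 1 + x := by linarith
  have hx2 : (1 : ℝ) - x ^ 2 = (1 - x) * (1 + x) := by ring
  rw [Real.rpow_neg ha.le, Real.rpow_neg hb.le, ← Real.sqrt_eq_rpow, ← Real.sqrt_eq_rpow,
    ← mul_inv, hx2, Real.sqrt_mul ha.le]

private lemma wt_integrable {g : ℝ → ℝ} (hg : Continuous g) :
    IntervalIntegrable (fun x => g x * (1 - x) ^ (-(1/2) : ℝ) * (1 + x) ^ (-(1/2) : ℝ))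
      volume (-1) 1 := by
  obtain ⟨C, hC⟩ := (isCompact_Icc (a := (-1:ℝ)) (b := 1)).exists_bound_of_continuousOn
    hg.continuousOn
  have hC0 : 0 ≤ C := le_trans (norm_nonneg (g 0)) (hC 0 (by norm_num))
  have h1 : IntervalIntegrable (fun x : ℝ => (1 - x) ^ (-(1/2) : ℝ)) volume (-1) 1 := by
    have := (intervalIntegrable_rpow' (a := 2) (b := 0) (r := (-(1/2) : ℝ))
      (by norm_num)).comp_sub_left 1
    norm_num at this
    exact this
  have h2 : IntervalIntegrable (fun x : ℝ => (1 + x) ^ (-(1/2) : ℝ)) volume (-1) 1 := by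
    have := (intervalIntegrable_rpow' (a := 0) (b := 2) (r := (-(1/2) : ℝ))
      (by norm_num)).comp_sub_right (-1)
    norm_num at this
    simpa [add_comm] using this
  have hbound : IntervalIntegrable
      (fun x : ℝ => C * ((1 - x) ^ (-(1/2) : ℝ) + (1 + x) ^ (-(1/2) : ℝ))) volume (-1) 1 :=
    (h1.add h2).const_mul C
  apply hbound.mono_fun'
  · apply Measurable.aestronglyMeasurable
    apply ((hg.measurable.mul _).mul _)
    · exact (measurable_const.sub measurable_id).pow measurable_const
    · exact (measurable_const.add measurable_id).pow measurable_const
  · rw [Filter.EventuallyLE, ae_restrict_iff' measurableSet_uIoc]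
    apply Filter.Eventually.of_forall
    intro x hx
    rw [Set.uIoc_of_le (by norm_num : (-1:ℝ) ≤ 1)] at hx
    obtain ⟨hxa, hxb⟩ := hx
    have ha : (0:ℝ) ≤ 1 - x := by linarith [hxb]
    have hb : (0:ℝ) < 1 + x := by linarith
    have hA : (0:ℝ) ≤ (1 - x) ^ (-(1/2) : ℝ) := Real.rpow_nonneg ha _
    have hB : (0:ℝ) ≤ (1 + x) ^ (-(1/2) : ℝ) := Real.rpow_nonneg hb.le _
    have hprod : (1 - x) ^ (-(1/2) : ℝ) * (1 + x) ^ (-(1/2) : ℝ)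
        ≤ (1 - x) ^ (-(1/2) : ℝ) + (1 + x) ^ (-(1/2) : ℝ) := by
      rcases le_total x 0 with h | h
      · have : (1 - x) ^ (-(1/2) : ℝ) ≤ 1 :=
          Real.rpow_le_one_of_one_le_of_nonpos (by linarith) (by norm_num)
        nlinarith
      · have : (1 + x) ^ (-(1/2) : ℝ) ≤ 1 :=
          Real.rpow_le_one_of_one_le_of_nonpos (by linarith) (by norm_num)
        nlinarith
    have hgx : ‖g x‖ ≤ C := hC x ⟨hxa.le, hxb⟩
    calc ‖g x * (1 - x) ^ (-(1/2) : ℝ) * (1 + x) ^ (-(1/2) : ℝ)‖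
        = ‖g x‖ * ((1 - x) ^ (-(1/2) : ℝ) * (1 + x) ^ (-(1/2) : ℝ)) := by
          rw [norm_mul, norm_mul, Real.norm_of_nonneg hA, Real.norm_of_nonneg hB, mul_assoc]
      _ ≤ C * ((1 - x) ^ (-(1/2) : ℝ) + (1 + x) ^ (-(1/2) : ℝ)) := by
          apply mul_le_mul hgx hprod (by positivity) hC0

private lemma integral_T (k : ℕ) (hk : 1 ≤ k) :
    ∫ x in (-1:ℝ)..1,
      (Polynomial.Chebyshev.T ℝ (k : ℤ)).eval x * (1 - x) ^ (-(1/2) : ℝ)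
        * (1 + x) ^ (-(1/2) : ℝ) = 0 := by
  have hk0 : (k:ℝ) ≠ 0 := Nat.cast_ne_zero.mpr (by omega)
  set F : ℝ → ℝ := fun x => -(1/(k:ℝ)) * Real.sin ((k:ℝ) * Real.arccos x) with hF
  have hcont : ContinuousOn F (Icc (-1:ℝ) 1) :=
    (continuous_const.mul (Real.continuous_sin.comp
      (continuous_const.mul Real.continuous_arccos))).continuousOn
  have hderiv : ∀ x ∈ Ioo (-1:ℝ) 1, HasDerivWithinAt F
      ((Polynomial.Chebyshev.T ℝ (k : ℤ)).eval x * (1 - x) ^ (-(1/2) : ℝ)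
        * (1 + x) ^ (-(1/2) : ℝ)) (Ioi x) x := by
    intro x hx
    have hx1 : x ≠ -1 := ne_of_gt hx.1
    have hx2 : x ≠ 1 := ne_of_lt hx.2
    have ha := Real.hasDerivAt_arccos hx1 hx2
    have hs : HasDerivAt (fun y => Real.sin ((k:ℝ) * Real.arccos y))
        (Real.cos ((k:ℝ) * Real.arccos x) * ((k:ℝ) * (-(1 / Real.sqrt (1 - x ^ 2))))) x :=
      (Real.hasDerivAt_sin _).comp x (ha.const_mul (k:ℝ))
    have hs' := hs.const_mul (-(1/(k:ℝ)))
    refine hs'.hasDerivWithinAt.congr_deriv ?_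
    symm
    have hT : (Polynomial.Chebyshev.T ℝ (k : ℤ)).eval x = Real.cos ((k:ℝ) * Real.arccos x) := by
      have h := Polynomial.Chebyshev.T_real_cos (Real.arccos x) (k : ℤ)
      rw [Real.cos_arccos (by linarith [hx.1]) (by linarith [hx.2])] at h
      push_cast at h ⊢
      exact h
    have hsq : Real.sqrt (1 - x ^ 2) ≠ 0 := by
      have : (0:ℝ) < 1 - x ^ 2 := by nlinarith [hx.1, hx.2]
      positivity
    rw [mul_assoc, weight_eq hx.1 hx.2, hT]
    field_simp
  have hint := wt_integrable (g := fun x => (Polynomial.Chebyshev.T ℝ (k : ℤ)).eval x)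
    (Polynomial.Chebyshev.T ℝ (k : ℤ)).continuous
  rw [intervalIntegral.integral_eq_sub_of_hasDeriv_right_of_le (by norm_num) hcont hderiv hint]
  simp [hF, Real.arccos_one, Real.arccos_neg_one, Real.sin_nat_mul_pi]

private lemma integral_wt :
    ∫ x in (-1:ℝ)..1, (1 - x) ^ (-(1/2) : ℝ) * (1 + x) ^ (-(1/2) : ℝ) = π := by
  have hderiv : ∀ x ∈ Ioo (-1:ℝ) 1, HasDerivWithinAt Real.arcsin
      ((1 - x) ^ (-(1/2) : ℝ) * (1 + x) ^ (-(1/2) : ℝ)) (Ioi x) x := by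
    intro x hx
    have h := Real.hasDerivAt_arcsin (ne_of_gt hx.1) (ne_of_lt hx.2)
    refine h.hasDerivWithinAt.congr_deriv ?_
    symm
    rw [weight_eq hx.1 hx.2, one_div]
  have hint := wt_integrable (g := fun _ : ℝ => (1:ℝ)) continuous_const
  simp only [one_mul] at hint
  rw [intervalIntegral.integral_eq_sub_of_hasDeriv_right_of_le (by norm_num)
    Real.continuous_arcsin.continuousOn hderiv hint]
  rw [Real.arcsin_one, Real.arcsin_neg_one]
  ring

private lemma key (r : ℕ) :
    ∫ x in (-1:ℝ)..1,
      JacobiNormPlus r x * (1 - x) ^ (-(1/2) : ℝ) * (1 + x) ^ (-(1/2) : ℝ) = π := by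
  induction r with
  | zero =>
      have h0 : ∀ x : ℝ, JacobiNormPlus 0 x = 1 := by
        intro x
        simp [JacobiNormPlus, Polynomial.Chebyshev.U_neg_one]
      simp only [h0, one_mul]
      exact integral_wt
  | succ n ih =>
      have hcontJ : Continuous fun x : ℝ => JacobiNormPlus n x :=
        ((Polynomial.Chebyshev.U ℝ ((n:ℕ) : ℤ)).continuous).add
          ((Polynomial.Chebyshev.U ℝ ((n:ℤ)-1)).continuous)
      have hpoly : Polynomial.Chebyshev.U ℝ ((n:ℤ)+1) + Polynomial.Chebyshev.U ℝ (n:ℤ)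
          = (Polynomial.Chebyshev.U ℝ (n:ℤ) + Polynomial.Chebyshev.U ℝ ((n:ℤ)-1))
            + 2 * Polynomial.Chebyshev.T ℝ ((n:ℤ)+1) := by
        have h1 := Polynomial.Chebyshev.T_eq_U_sub_X_mul_U ℝ ((n:ℤ)+1)
        have h2 := Polynomial.Chebyshev.U_sub_one ℝ (n:ℤ)
        simp only [add_sub_cancel_right] at h1
        rw [h1, h2]
        ring
      have hsum : ∀ x : ℝ, JacobiNormPlus (n+1) x
          = JacobiNormPlus n x + 2 * (Polynomial.Chebyshev.T ℝ ((n:ℤ)+1)).eval x := by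
        intro x
        simp only [JacobiNormPlus, Nat.cast_add, Nat.cast_one, add_sub_cancel_right]
        rw [← Polynomial.eval_add, hpoly]
        simp [Polynomial.eval_add, Polynomial.eval_mul]
      have h2' : (fun x : ℝ =>
            JacobiNormPlus (n+1) x * (1 - x) ^ (-(1/2) : ℝ) * (1 + x) ^ (-(1/2) : ℝ))
          = fun x : ℝ => JacobiNormPlus n x * (1 - x) ^ (-(1/2) : ℝ) * (1 + x) ^ (-(1/2) : ℝ)
            + (2 * (Polynomial.Chebyshev.T ℝ ((n:ℤ)+1)).eval x) * (1 - x) ^ (-(1/2) : ℝ)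
              * (1 + x) ^ (-(1/2) : ℝ) := by
        funext x; rw [hsum x]; ring
      rw [h2', intervalIntegral.integral_add (wt_integrable hcontJ)
        (wt_integrable (g := fun x => 2 * (Polynomial.Chebyshev.T ℝ ((n:ℤ)+1)).eval x) (continuous_const.mul
          (Polynomial.Chebyshev.T ℝ ((n:ℤ)+1)).continuous))]
      have hconst : ∫ x in (-1:ℝ)..1,
            (2 * (Polynomial.Chebyshev.T ℝ ((n:ℤ)+1)).eval x) * (1 - x) ^ (-(1/2) : ℝ)
              * (1 + x) ^ (-(1/2) : ℝ)
          = 2 * ∫ x in (-1:ℝ)..1, (Polynomial.Chebyshev.T ℝ ((n:ℤ)+1)).eval x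
              * (1 - x) ^ (-(1/2) : ℝ) * (1 + x) ^ (-(1/2) : ℝ) := by
        rw [← intervalIntegral.integral_const_mul]
        congr 1; funext x; ring
      have hT0 := integral_T (n+1) (by omega)
      push_cast at hT0
      rw [ih, hconst, hT0]
      ring

/-- for every `r ≥ 0`,
`(1/π) ∫_{-1}^{1} 𝒥_r^{(1/2,-1/2)}(x) (1-x)^{-1/2} (1+x)^{-1/2} dx = 1`. -/
theorem statement1 (r : ℕ) :
    (1 / Real.pi) *
      ∫ x in (-1 : ℝ)..1,
        JacobiNormPlus r x * (1 - x) ^ (-(1/2) : ℝ) * (1 + x) ^ (-(1/2) : ℝ) = 1 := by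
  rw [key r]
  field_simp
end

section
/- For every T ∈ C¹[-1,1] and every integer s ≥ 0, ∑_{r=s+1}^{∞} (W^{(-1/2,-1/2)}(r)/π) ∫_{-1}^{1} 𝒥_r^{(-1/2,-1/2)}(x) T(x) (1-x)^{-1/2}(1+x)^{-1/2} dx = (1/π) ∫_{-1}^{1} 𝒥_s^{(1/2,-1/2)}(x) (T(1) - T(x)) (1-x)^{-1/2}(1+x)^{-1/2} dx. -/
open MeasureTheory Set Real Filter

lemma cos_image_Ioo : Real.cos '' Set.Ioo 0 π = Set.Ioo (-1 : ℝ) 1 := by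
  ext x
  constructor
  · rintro ⟨θ, hθ, rfl⟩
    have h1 : Real.cos θ < Real.cos 0 :=
      Real.strictAntiOn_cos ⟨le_refl 0, Real.pi_pos.le⟩ ⟨hθ.1.le, hθ.2.le⟩ hθ.1
    have h2 : Real.cos π < Real.cos θ :=
      Real.strictAntiOn_cos ⟨hθ.1.le, hθ.2.le⟩ ⟨Real.pi_pos.le, le_refl π⟩ hθ.2
    rw [Real.cos_zero] at h1
    rw [Real.cos_pi] at h2
    exact ⟨h2, h1⟩
  · intro hx
    refine ⟨Real.arccos x, ⟨Real.arccos_pos.2 hx.2, ?_⟩, Real.cos_arccos hx.1.le hx.2.le⟩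
    rcases lt_or_eq_of_le (Real.arccos_le_pi x) with h | h
    · exact h
    · exfalso
      have h2 := Real.cos_arccos hx.1.le hx.2.le
      rw [h, Real.cos_pi] at h2
      linarith [hx.1]

lemma weight_integral_eq (g : ℝ → ℝ) :
    (∫ x in (-1 : ℝ)..1, g x * (1 - x) ^ (-(1/2) : ℝ) * (1 + x) ^ (-(1/2) : ℝ))
      = ∫ θ in (0 : ℝ)..π, g (Real.cos θ) := by
  rw [intervalIntegral.integral_of_le (by norm_num : (-1:ℝ) ≤ 1),
      intervalIntegral.integral_of_le Real.pi_pos.le,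
      MeasureTheory.integral_Ioc_eq_integral_Ioo,
      MeasureTheory.integral_Ioc_eq_integral_Ioo, ← cos_image_Ioo,
      MeasureTheory.integral_image_eq_integral_abs_deriv_smul measurableSet_Ioo
        (fun θ _ => (Real.hasDerivAt_cos θ).hasDerivWithinAt)
        (Real.injOn_cos.mono Set.Ioo_subset_Icc_self)
        (fun x => g x * (1 - x) ^ (-(1/2) : ℝ) * (1 + x) ^ (-(1/2) : ℝ))]
  refine MeasureTheory.setIntegral_congr_fun measurableSet_Ioo (fun θ hθ => ?_)
  have hs : 0 < Real.sin θ := Real.sin_pos_of_pos_of_lt_pi hθ.1 hθ.2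
  have hmem : Real.cos θ ∈ Set.Ioo (-1 : ℝ) 1 := cos_image_Ioo ▸ Set.mem_image_of_mem _ hθ
  have h1 : (0:ℝ) < 1 - Real.cos θ := by linarith [hmem.2]
  have h2 : (0:ℝ) < 1 + Real.cos θ := by linarith [hmem.1]
  have key : (1 - Real.cos θ) ^ (-(1/2) : ℝ) * (1 + Real.cos θ) ^ (-(1/2) : ℝ)
      = (Real.sin θ)⁻¹ := by
    rw [← Real.mul_rpow h1.le h2.le]
    have hsq : (1 - Real.cos θ) * (1 + Real.cos θ) = Real.sin θ ^ 2 := by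
      have := Real.sin_sq_add_cos_sq θ; nlinarith
    rw [hsq, ← Real.rpow_natCast (Real.sin θ) 2, ← Real.rpow_mul hs.le]
    norm_num
    rw [Real.rpow_neg_one]
  simp only [smul_eq_mul]
  rw [abs_neg, abs_of_pos hs, mul_assoc, key]
  field_simp

lemma jacobiNormPlus_mul_sin (m : ℕ) (θ : ℝ) :
    JacobiNormPlus m (Real.cos θ) * Real.sin θ
      = Real.sin ((m + 1) * θ) + Real.sin (m * θ) := by
  unfold JacobiNormPlus
  rw [add_mul, Polynomial.Chebyshev.U_real_cos, Polynomial.Chebyshev.U_real_cos]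
  push_cast
  ring_nf

lemma dirichlet_mul_sin (m : ℕ) (θ : ℝ) :
    (1 + 2 * ∑ k ∈ Finset.range m, Real.cos ((k + 1) * θ)) * Real.sin θ
      = Real.sin ((m + 1) * θ) + Real.sin (m * θ) := by
  induction m with
  | zero => simp
  | succ m ih =>
    rw [Finset.sum_range_succ]
    have h : Real.sin (((m:ℝ) + 2) * θ) - Real.sin ((m:ℝ) * θ)
        = 2 * Real.sin θ * Real.cos (((m:ℝ) + 1) * θ) := by
      have h0 := Real.sin_sub_sin (((m:ℝ) + 2) * θ) ((m:ℝ) * θ)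
      have e1 : (((m:ℝ) + 2) * θ - (m:ℝ) * θ) / 2 = θ := by ring
      have e2 : (((m:ℝ) + 2) * θ + (m:ℝ) * θ) / 2 = ((m:ℝ) + 1) * θ := by ring
      rw [e1, e2] at h0
      linarith [h0]
    push_cast
    push_cast at ih
    rw [show ((m:ℝ) + 1 + 1) * θ = ((m:ℝ) + 2) * θ from by ring]
    linear_combination ih - h

lemma jacobiNormPlus_cos (m : ℕ) {θ : ℝ} (hs : Real.sin θ ≠ 0) :
    JacobiNormPlus m (Real.cos θ)
      = 1 + 2 * ∑ k ∈ Finset.range m, Real.cos ((k + 1) * θ) :=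
  mul_right_cancel₀ hs ((jacobiNormPlus_mul_sin m θ).trans (dirichlet_mul_sin m θ).symm)

lemma integral_cos_nat (k : ℕ) (hk : k ≠ 0) :
    ∫ θ in (0:ℝ)..π, Real.cos (k * θ) = 0 := by
  have hc : (k : ℝ) ≠ 0 := Nat.cast_ne_zero.mpr hk
  rw [intervalIntegral.integral_comp_mul_left (fun x => Real.cos x) hc]
  simp [integral_cos, Real.sin_nat_mul_pi]

section Fourier

local instance fact_two_pi_pos : Fact ((0:ℝ) < 2 * π) := ⟨by positivity⟩

lemma lift_eq_liftIoc {F : ℝ → ℂ} (hF : Function.Periodic F (2 * π)) :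
    AddCircle.liftIoc (2 * π) 0 F = hF.lift := by
  funext z
  set u := (AddCircle.equivIoc (2 * π) 0) z with hu
  have hz : ((u : ℝ) : AddCircle (2 * π)) = z := by
    have h : (AddCircle.equivIoc (2 * π) 0).symm u = ((u : ℝ) : AddCircle (2 * π)) := rfl
    rw [← h, hu, Equiv.symm_apply_apply]
  rw [← hz, AddCircle.liftIoc_coe_apply u.2, Function.Periodic.lift_coe]

lemma lift_fourierCoeff {F : ℝ → ℂ} (hF : Function.Periodic F (2 * π)) (n : ℤ) :
    fourierCoeff hF.lift n
      = fourierCoeffOn (by positivity : (0:ℝ) < 0 + 2 * π) F n := by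
  rw [← lift_eq_liftIoc hF]
  exact fourierCoeff_liftIoc_eq F n

lemma fold_integral (g : ℝ → ℝ) (hg : Continuous g) (hper : Function.Periodic g (2 * π))
    (heven : ∀ x, g (-x) = g x) :
    ∫ x in (0:ℝ)..0 + 2 * π, g x = 2 * ∫ x in (0:ℝ)..π, g x := by
  have h1 : ∫ x in (0:ℝ)..0 + 2 * π, g x = ∫ x in (-π)..(-π) + 2 * π, g x :=
    hper.intervalIntegral_add_eq 0 (-π)
  have h2 : (-π) + 2 * π = π := by ring
  rw [h1, h2]
  have h3 : ∫ x in (-π)..(0:ℝ), g x = ∫ x in (0:ℝ)..π, g x := by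
    have h4 := intervalIntegral.integral_comp_neg (a := 0) (b := π) g
    simp only [neg_zero] at h4
    rw [← h4]
    exact intervalIntegral.integral_congr fun x _ => heven x
  rw [← intervalIntegral.integral_add_adjacent_intervals
      (hg.intervalIntegrable (-π) 0) (hg.intervalIntegrable 0 π), h3]
  ring

set_option maxHeartbeats 1000000 in
lemma hasSum_cosine_series (f : ℝ → ℝ) (hf : ContDiff ℝ 1 f)
    (hper : Function.Periodic f (2 * π)) (heven : ∀ θ, f (-θ) = f θ) :
    HasSum (fun n : ℕ => (2 / π) * ∫ θ in (0:ℝ)..π, Real.cos (n * θ) * f θ)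
      (f 0 + (1 / π) * ∫ θ in (0:ℝ)..π, f θ) := by
  have h2pi : (0:ℝ) < 0 + 2 * π := by positivity
  set F : ℝ → ℂ := fun x => (f x : ℂ) with hFdef
  have hFper : Function.Periodic F (2 * π) := fun x => by simp [hFdef, hper x]
  have hFcont : Continuous F := Complex.continuous_ofReal.comp hf.continuous
  set F' : ℝ → ℂ := fun x => ((deriv f x : ℝ) : ℂ) with hF'def
  have hf'per : Function.Periodic (deriv f) (2 * π) := by
    intro x
    rw [← deriv_comp_add_const]
    congr 1
    funext y
    exact hper y
  have hF'per : Function.Periodic F' (2 * π) := fun x => by simp [hF'def, hf'per x]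
  have hf'cont : Continuous (deriv f) := hf.continuous_deriv le_rfl
  have hF'cont : Continuous F' := Complex.continuous_ofReal.comp hf'cont
  set G : AddCircle (2 * π) → ℂ := hFper.lift with hGdef
  set G' : AddCircle (2 * π) → ℂ := hF'per.lift with hG'def
  have hGcont : Continuous G := continuous_coinduced_dom.mpr hFcont
  have hG'cont : Continuous G' := continuous_coinduced_dom.mpr hF'cont
  set c : ℤ → ℂ := fun n => fourierCoeff G n with hcdef
  set c' : ℤ → ℂ := fun n => fourierCoeff G' n with hc'def
  -- derivative relation
  have hrel : ∀ n : ℤ, n ≠ 0 →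
      c n = -(((0 + 2 * π : ℝ) : ℂ) * c' n) / (-2 * (π : ℂ) * Complex.I * n) := by
    intro n hn
    have hc1 : c n = fourierCoeffOn h2pi F n := lift_fourierCoeff hFper n
    have hc2 : c' n = fourierCoeffOn h2pi F' n := lift_fourierCoeff hF'per n
    rw [hc1, hc2]
    rw [fourierCoeffOn_of_hasDerivAt h2pi hn
      (fun x _ => ((hf.differentiable one_ne_zero).differentiableAt.hasDerivAt (x := x)).ofReal_comp)
      (hF'cont.intervalIntegrable _ _)]
    have hF0 : F (0 + 2 * π) - F 0 = 0 := by rw [hFper 0, sub_self]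
    rw [hF0, mul_zero, zero_sub]
    push_cast
    ring
  -- norm relation
  have hnorm : ∀ n : ℤ, n ≠ 0 → ‖c n‖ = ‖c' n‖ / |(n : ℝ)| := by
    intro n hn
    rw [hrel n hn, norm_div, norm_neg, norm_mul]
    have hden : ‖(-2 * (π : ℂ) * Complex.I * (n : ℂ))‖ = 2 * π * |(n : ℝ)| := by
      rw [show ((n : ℂ)) = (((n : ℝ) : ℂ)) from by push_cast; rfl]
      simp only [norm_mul, norm_neg, Complex.norm_I, Complex.norm_real, Real.norm_eq_abs]
      rw [abs_of_pos Real.pi_pos]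
      norm_num
    rw [hden, Complex.norm_real, Real.norm_eq_abs,
      abs_of_pos (by positivity : (0:ℝ) < 0 + 2 * π)]
    have hnabs : |(n : ℝ)| ≠ 0 := by
      simp only [ne_eq, abs_eq_zero, Int.cast_eq_zero]; exact hn
    field_simp
    ring
  -- Parseval summability for the derivative coefficients
  have hsum2 : Summable (fun n : ℤ => ‖c' n‖ ^ 2) := by
    set GC' : C(AddCircle (2 * π), ℂ) := ⟨G', hG'cont⟩ with hGC'
    have hmem := lp.memℓp (fourierBasis.repr
      ((ContinuousMap.toLp 2 AddCircle.haarAddCircle ℂ) GC'))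
    rw [memℓp_gen_iff (by norm_num : (0:ℝ) < (2 : ENNReal).toReal)] at hmem
    refine (summable_congr fun i => ?_).mp hmem
    rw [fourierBasis_repr, fourierCoeff_toLp]
    have : fourierCoeff (⇑GC') i = c' i := by rw [hGC']; rfl
    rw [this]
    norm_num
  -- summability of c
  have hsummable : Summable c := by
    apply Summable.of_norm_bounded_eventually
      (g := fun n : ℤ => (1/2) * ‖c' n‖ ^ 2 + (1/2) * (1 / (n : ℝ) ^ 2))
      ((hsum2.mul_left _).add
        ((Real.summable_one_div_int_pow.mpr one_lt_two).mul_left _))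
    filter_upwards [Filter.eventually_cofinite_ne 0] with n hn
    rw [hnorm n hn]
    have hn0 : (0:ℝ) < |(n : ℝ)| := by
      rw [abs_pos]; exact_mod_cast hn
    have h1 : (1:ℝ) ≤ |(n : ℝ)| := by
      rw [← Int.cast_abs]; exact_mod_cast Int.one_le_abs hn
    have hsq : |(n : ℝ)| ^ 2 = (n : ℝ) ^ 2 := sq_abs _
    have e1 : ‖c' n‖ / |(n : ℝ)| = ‖c' n‖ * (1 / |(n : ℝ)|) := by ring
    have e2 : 1 / (n : ℝ) ^ 2 = (1 / |(n : ℝ)|) ^ 2 := by rw [div_pow, one_pow, hsq]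
    rw [e1, e2]
    nlinarith [sq_nonneg (‖c' n‖ - 1 / |(n : ℝ)|)]
  -- pointwise convergence of the Fourier series at 0
  have hHasSum : HasSum c ((f 0 : ℂ)) := by
    have h := has_pointwise_sum_fourier_series_of_summable
      (f := ContinuousMap.mk G hGcont) hsummable ((0 : ℝ) : AddCircle (2 * π))
    simp only [ContinuousMap.coe_mk] at h
    have h0 : ((0 : ℝ) : AddCircle (2 * π)) = 0 := QuotientAddGroup.mk_zero _
    rw [h0] at h
    simp only [fourier_eval_zero, smul_eq_mul, mul_one] at h
    have hG0 : G ((0:ℝ) : AddCircle (2 * π)) = (f 0 : ℂ) := rfl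
    rw [h0] at hG0
    rwa [hG0] at h
  -- explicit formula for fourier characters on reals
  have hfoureq : ∀ (m : ℤ) (x : ℝ),
      (fourier m ((x : ℝ) : AddCircle (2 * π)) : ℂ)
        = Complex.exp ((((m : ℝ) * x : ℝ) : ℂ) * Complex.I) := by
    intro m x
    rw [fourier_coe_apply]
    congr 1
    have hpi : ((π : ℝ) : ℂ) ≠ 0 := Complex.ofReal_ne_zero.mpr Real.pi_ne_zero
    push_cast
    field_simp
  -- the sum of conjugate coefficients is a real cosine integral
  have hterm : ∀ n : ℤ, c n + c (-n)
      = (((2 / π) * ∫ θ in (0:ℝ)..π, Real.cos ((n : ℝ) * θ) * f θ : ℝ) : ℂ) := by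
    intro n
    have e1 : c n = (1 / (2 * π) : ℝ) • ∫ x in (0:ℝ)..0 + 2 * π,
        fourier (-n) ((x : ℝ) : AddCircle (2 * π)) • G ((x : ℝ) : AddCircle (2 * π)) :=
      fourierCoeff_eq_intervalIntegral G n 0
    have e2 : c (-n) = (1 / (2 * π) : ℝ) • ∫ x in (0:ℝ)..0 + 2 * π,
        fourier n ((x : ℝ) : AddCircle (2 * π)) • G ((x : ℝ) : AddCircle (2 * π)) := by
      have := fourierCoeff_eq_intervalIntegral G (-n) 0
      rwa [neg_neg] at this
    have hcont1 : Continuous fun x : ℝ => (fourier (-n) ((x : ℝ) : AddCircle (2*π)) : ℂ) :=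
      (map_continuous (fourier (-n))).comp (AddCircle.continuous_mk' _)
    have hcont2 : Continuous fun x : ℝ => (fourier n ((x : ℝ) : AddCircle (2*π)) : ℂ) :=
      (map_continuous (fourier n)).comp (AddCircle.continuous_mk' _)
    have hGcont' : Continuous fun x : ℝ => G ((x : ℝ) : AddCircle (2*π)) :=
      hGcont.comp (AddCircle.continuous_mk' _)
    rw [e1, e2, ← smul_add, ← intervalIntegral.integral_add
      (f := fun x : ℝ => fourier (-n) ((x : ℝ) : AddCircle (2*π)) • G ((x:ℝ) : AddCircle (2*π)))
      (g := fun x : ℝ => fourier n ((x : ℝ) : AddCircle (2*π)) • G ((x:ℝ) : AddCircle (2*π)))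
      ((hcont1.smul hGcont').intervalIntegrable _ _)
      ((hcont2.smul hGcont').intervalIntegrable _ _)]
    have hptwise : ∀ x : ℝ,
        fourier (-n) ((x : ℝ) : AddCircle (2*π)) • G ((x:ℝ) : AddCircle (2*π))
          + fourier n ((x : ℝ) : AddCircle (2*π)) • G ((x:ℝ) : AddCircle (2*π))
        = ((2 * Real.cos ((n:ℝ) * x) * f x : ℝ) : ℂ) := by
      intro x
      have hGcoe : G ((x:ℝ) : AddCircle (2*π)) = ((f x : ℝ) : ℂ) := rfl
      rw [smul_eq_mul, smul_eq_mul, hGcoe, hfoureq (-n) x, hfoureq n x]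
      have hy : (((-n : ℤ) : ℝ) * x : ℝ) = -(((n:ℝ) * x)) := by push_cast; ring
      rw [hy]
      set y : ℝ := (n:ℝ) * x with hydef
      have hexp : Complex.exp (((-y : ℝ) : ℂ) * Complex.I)
          + Complex.exp (((y : ℝ) : ℂ) * Complex.I) = ((2 * Real.cos y : ℝ) : ℂ) := by
        rw [Complex.exp_mul_I, Complex.exp_mul_I]
        push_cast
        simp only [Complex.cos_neg, Complex.sin_neg]
        ring
      calc Complex.exp (((-y : ℝ) : ℂ) * Complex.I) * ((f x : ℝ) : ℂ)
            + Complex.exp (((y : ℝ) : ℂ) * Complex.I) * ((f x : ℝ) : ℂ)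
          = (Complex.exp (((-y : ℝ) : ℂ) * Complex.I)
            + Complex.exp (((y : ℝ) : ℂ) * Complex.I)) * ((f x : ℝ) : ℂ) := by ring
        _ = ((2 * Real.cos y : ℝ) : ℂ) * ((f x : ℝ) : ℂ) := by rw [hexp]
        _ = ((2 * Real.cos y * f x : ℝ) : ℂ) := by push_cast; ring
    rw [intervalIntegral.integral_congr (fun x _ => hptwise x)]
    rw [intervalIntegral.integral_ofReal]
    -- fold the even periodic integral
    have hgcont : Continuous fun x : ℝ => 2 * Real.cos ((n:ℝ) * x) * f x :=
      (continuous_const.mul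
        (Real.continuous_cos.comp (continuous_const.mul continuous_id))).mul hf.continuous
    have hgper : Function.Periodic (fun x : ℝ => 2 * Real.cos ((n:ℝ) * x) * f x) (2*π) := by
      intro x
      show 2 * Real.cos ((n:ℝ) * (x + 2 * π)) * f (x + 2 * π) = 2 * Real.cos ((n:ℝ) * x) * f x
      have h1 : (n:ℝ) * (x + 2*π) = (n:ℝ)*x + (n:ℤ) * (2*π) := by push_cast; ring
      rw [h1, Real.cos_add_int_mul_two_pi, hper x]
    have hgeven : ∀ x : ℝ, 2 * Real.cos ((n:ℝ) * -x) * f (-x) = 2 * Real.cos ((n:ℝ) * x) * f x := by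
      intro x
      rw [show (n:ℝ) * -x = -((n:ℝ)*x) from by ring, Real.cos_neg, heven x]
    rw [fold_integral _ hgcont hgper hgeven]
    rw [Complex.real_smul, ← Complex.ofReal_mul]
    congr 1
    have hi : ∫ x in (0:ℝ)..π, 2 * Real.cos ((n:ℝ) * x) * f x
        = 2 * ∫ x in (0:ℝ)..π, Real.cos ((n:ℝ) * x) * f x := by
      rw [← intervalIntegral.integral_const_mul]
      exact intervalIntegral.integral_congr fun x _ => by ring
    rw [hi]
    have hpi := Real.pi_ne_zero
    field_simp
  -- the zeroth coefficient
  have hc0 : c 0 = (((1 / π) * ∫ θ in (0:ℝ)..π, f θ : ℝ) : ℂ) := by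
    have h := hterm 0
    simp only [neg_zero] at h
    have hint : ∫ θ in (0:ℝ)..π, Real.cos (((0:ℤ) : ℝ) * θ) * f θ
        = ∫ θ in (0:ℝ)..π, f θ :=
      intervalIntegral.integral_congr fun θ _ => by norm_num
    apply mul_left_cancel₀ (two_ne_zero (α := ℂ))
    rw [show (2:ℂ) * c 0 = c 0 + c 0 from by ring, h, hint]
    push_cast
    ring
  -- conclude
  have hZ := hHasSum.nat_add_neg
  rw [hc0] at hZ
  have hfun : (fun n : ℕ => c (n : ℤ) + c (-(n : ℤ)))
      = fun n : ℕ => (((2 / π) * ∫ θ in (0:ℝ)..π, Real.cos ((n:ℝ) * θ) * f θ : ℝ) : ℂ) := by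
    funext n
    rw [hterm (n : ℤ)]
    norm_num
  rw [hfun] at hZ
  have hv : ((f 0 : ℂ)) + (((1 / π) * ∫ θ in (0:ℝ)..π, f θ : ℝ) : ℂ)
      = (((f 0 + (1 / π) * ∫ θ in (0:ℝ)..π, f θ : ℝ)) : ℂ) := by push_cast; ring
  rw [hv] at hZ
  rw [Complex.hasSum_iff] at hZ
  have hre := hZ.1
  simp only [Complex.ofReal_re] at hre
  exact hre

end Fourier


set_option maxHeartbeats 1000000 in
/-- for every `T ∈ C¹[-1,1]` and every `s ≥ 0`,
`∑_{r=s+1}^{∞} (W^{(-1/2,-1/2)}(r)/π) ∫_{-1}^{1} 𝒥_r^{(-1/2,-1/2)}(x) T(x) (1-x)^{-1/2}(1+x)^{-1/2} dx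
 = (1/π) ∫_{-1}^{1} 𝒥_s^{(1/2,-1/2)}(x) (T(1) - T(x)) (1-x)^{-1/2}(1+x)^{-1/2} dx`. -/
theorem statement3 (T : ℝ → ℝ) (hT : ContDiffOn ℝ 1 T (Set.Icc (-1 : ℝ) 1)) (s : ℕ) :
    (∑' r : ℕ,
      (Wwt (-1/2) (s + 1 + r) / Real.pi) *
        ∫ x in (-1 : ℝ)..1,
          JacobiNormMinus (s + 1 + r) x * T x * (1 - x) ^ (-(1/2) : ℝ) * (1 + x) ^ (-(1/2) : ℝ))
    = (1 / Real.pi) *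
        ∫ x in (-1 : ℝ)..1,
          JacobiNormPlus s x * (T 1 - T x) * (1 - x) ^ (-(1/2) : ℝ) * (1 + x) ^ (-(1/2) : ℝ) := by
  have hpi := Real.pi_ne_zero
  set f : ℝ → ℝ := fun θ => T (Real.cos θ) with hfdef
  have hf : ContDiff ℝ 1 f := by
    rw [← contDiffOn_univ]
    exact hT.comp (Real.contDiff_cos.of_le le_top).contDiffOn
      (fun x _ => ⟨Real.neg_one_le_cos x, Real.cos_le_one x⟩)
  have hper : Function.Periodic f (2 * π) := fun x => by
    simp only [hfdef]
    rw [Real.cos_periodic x]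
  have heven : ∀ θ, f (-θ) = f θ := fun θ => by
    simp only [hfdef]
    rw [Real.cos_neg]
  have hf0 : f 0 = T 1 := by simp [hfdef]
  have hcont_f : Continuous f := hf.continuous
  set J : ℕ → ℝ := fun m => ∫ θ in (0:ℝ)..π, Real.cos (m * θ) * f θ with hJdef
  set a : ℕ → ℝ := fun n => (2 / π) * J n with hadef
  set I0 : ℝ := ∫ θ in (0:ℝ)..π, f θ with hI0def
  have hkey : HasSum a (f 0 + (1 / π) * I0) := hasSum_cosine_series f hf hper heven
  have hJ0 : J 0 = I0 := by
    rw [hJdef, hI0def]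
    exact intervalIntegral.integral_congr fun θ _ => by norm_num
  -- LHS terms
  have hterm : ∀ r : ℕ, (Wwt (-1/2) (s + 1 + r) / Real.pi) *
      ∫ x in (-1 : ℝ)..1,
        JacobiNormMinus (s + 1 + r) x * T x * (1 - x) ^ (-(1/2) : ℝ) * (1 + x) ^ (-(1/2) : ℝ)
      = a (s + 1 + r) := by
    intro r
    have hW : Wwt (-1/2) (s + 1 + r) = 2 := if_pos ⟨rfl, by omega⟩
    rw [hW, weight_integral_eq (fun x => JacobiNormMinus (s + 1 + r) x * T x)]
    rw [hadef]
    simp only [hJdef]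
    congr 1
    refine intervalIntegral.integral_congr fun θ _ => ?_
    show JacobiNormMinus (s + 1 + r) (Real.cos θ) * T (Real.cos θ)
      = Real.cos ((s + 1 + r : ℕ) * θ) * f θ
    rw [hfdef]
    simp only
    congr 2
    unfold JacobiNormMinus
    rw [Polynomial.Chebyshev.T_real_cos]
    norm_num
  -- sum over the tail
  have hLHS : (∑' r : ℕ,
      (Wwt (-1/2) (s + 1 + r) / Real.pi) *
        ∫ x in (-1 : ℝ)..1,
          JacobiNormMinus (s + 1 + r) x * T x * (1 - x) ^ (-(1/2) : ℝ) * (1 + x) ^ (-(1/2) : ℝ))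
      = (f 0 + (1 / π) * I0) - ∑ i ∈ Finset.range (s+1), a i := by
    have h1 : HasSum (fun r : ℕ => a (r + (s+1)))
        ((f 0 + (1 / π) * I0) - ∑ i ∈ Finset.range (s+1), a i) := by
      apply (hasSum_nat_add_iff (s+1)).mpr
      rwa [sub_add_cancel]
    have h2 : (fun r : ℕ => (Wwt (-1/2) (s + 1 + r) / Real.pi) *
        ∫ x in (-1 : ℝ)..1,
          JacobiNormMinus (s + 1 + r) x * T x * (1 - x) ^ (-(1/2) : ℝ) * (1 + x) ^ (-(1/2) : ℝ))
        = fun r : ℕ => a (r + (s+1)) := by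
      funext r
      rw [hterm r]
      congr 1
      omega
    rw [h2, h1.tsum_eq]
  rw [hLHS]
  -- RHS computation
  rw [weight_integral_eq (fun x => JacobiNormPlus s x * (T 1 - T x))]
  have hDir : ∫ θ in (0:ℝ)..π, JacobiNormPlus s (Real.cos θ) * (T 1 - T (Real.cos θ))
      = ∫ θ in (0:ℝ)..π,
        ((1 + 2 * ∑ k ∈ Finset.range s, Real.cos ((k + 1) * θ)) * (T 1 - f θ)) := by
    rw [intervalIntegral.integral_of_le Real.pi_pos.le,
        intervalIntegral.integral_of_le Real.pi_pos.le,
        MeasureTheory.integral_Ioc_eq_integral_Ioo,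
        MeasureTheory.integral_Ioc_eq_integral_Ioo]
    refine MeasureTheory.setIntegral_congr_fun measurableSet_Ioo fun θ hθ => ?_
    rw [jacobiNormPlus_cos s (ne_of_gt (Real.sin_pos_of_pos_of_lt_pi hθ.1 hθ.2))]
  rw [hDir]
  -- expand the product
  have hexp : ∫ θ in (0:ℝ)..π,
      ((1 + 2 * ∑ k ∈ Finset.range s, Real.cos ((k + 1) * θ)) * (T 1 - f θ))
      = (∫ θ in (0:ℝ)..π, (T 1 - f θ))
        + ∑ k ∈ Finset.range s, ∫ θ in (0:ℝ)..π,
            (2 * (Real.cos (((k:ℝ) + 1) * θ) * (T 1 - f θ))) := by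
    have hpt : ∀ θ : ℝ, (1 + 2 * ∑ k ∈ Finset.range s, Real.cos ((k + 1) * θ)) * (T 1 - f θ)
        = (T 1 - f θ) + ∑ k ∈ Finset.range s,
            (2 * (Real.cos (((k:ℝ) + 1) * θ) * (T 1 - f θ))) := by
      intro θ
      rw [add_mul, one_mul, mul_assoc, Finset.sum_mul, Finset.mul_sum]
    rw [intervalIntegral.integral_congr (fun θ _ => hpt θ)]
    have hint1 : IntervalIntegrable (fun θ => T 1 - f θ) MeasureTheory.volume 0 π :=
      (continuous_const.sub hcont_f).intervalIntegrable _ _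
    have hint2 : ∀ k ∈ Finset.range s,
        IntervalIntegrable (fun θ => 2 * (Real.cos (((k:ℝ) + 1) * θ) * (T 1 - f θ)))
          MeasureTheory.volume 0 π := fun k _ =>
      (continuous_const.mul ((Real.continuous_cos.comp
        (continuous_const.mul continuous_id)).mul (continuous_const.sub hcont_f))).intervalIntegrable _ _
    symm
    rw [← intervalIntegral.integral_finset_sum hint2]
    have hadd := intervalIntegral.integral_add hint1 (IntervalIntegrable.sum _ hint2)
    simp only [Finset.sum_apply] at hadd
    exact hadd.symm
  rw [hexp]
  -- evaluate the pieces
  have h0 : ∫ θ in (0:ℝ)..π, (T 1 - f θ) = π * T 1 - I0 := by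
    rw [intervalIntegral.integral_sub (intervalIntegrable_const) (hcont_f.intervalIntegrable _ _)]
    rw [hI0def]
    simp [mul_comm]
  have hsplit : ∀ k : ℕ,
      ∫ θ in (0:ℝ)..π, (2 * (Real.cos (((k:ℝ) + 1) * θ) * (T 1 - f θ))) = -2 * J (k+1) := by
    intro k
    have hcast : ((k:ℝ) + 1) = ((k + 1 : ℕ) : ℝ) := by push_cast; ring
    have h1 : ∀ θ : ℝ, 2 * (Real.cos (((k:ℝ) + 1) * θ) * (T 1 - f θ))
        = 2 * (T 1 * Real.cos (((k + 1 : ℕ) : ℝ) * θ)) - 2 * (Real.cos (((k + 1 : ℕ) : ℝ) * θ) * f θ) := by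
      intro θ
      rw [← hcast]
      ring
    rw [intervalIntegral.integral_congr (fun θ _ => h1 θ)]
    have hc1 : Continuous fun θ : ℝ => Real.cos (((k + 1 : ℕ) : ℝ) * θ) :=
      Real.continuous_cos.comp (continuous_const.mul continuous_id)
    rw [intervalIntegral.integral_sub
      (f := fun θ : ℝ => 2 * (T 1 * Real.cos (((k + 1 : ℕ) : ℝ) * θ)))
      (g := fun θ : ℝ => 2 * (Real.cos (((k + 1 : ℕ) : ℝ) * θ) * f θ))
      ((continuous_const.mul (continuous_const.mul hc1)).intervalIntegrable _ _)
      ((continuous_const.mul (hc1.mul hcont_f)).intervalIntegrable _ _)]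
    rw [intervalIntegral.integral_const_mul, intervalIntegral.integral_const_mul,
        intervalIntegral.integral_const_mul, integral_cos_nat (k+1) (by omega)]
    rw [hJdef]
    ring
  have hsum : ∑ k ∈ Finset.range s, ∫ θ in (0:ℝ)..π,
      (2 * (Real.cos (((k:ℝ) + 1) * θ) * (T 1 - f θ)))
      = -2 * ∑ k ∈ Finset.range s, J (k+1) := by
    rw [Finset.mul_sum]
    exact Finset.sum_congr rfl fun k _ => hsplit k
  rw [h0, hsum]
  -- the finite sum of a
  have hsa : ∑ i ∈ Finset.range (s+1), a i
      = (2/π) * I0 + (2/π) * ∑ k ∈ Finset.range s, J (k+1) := by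
    rw [Finset.sum_range_succ']
    rw [hadef]
    simp only
    rw [hJ0, Finset.mul_sum]
    ring
  rw [hsa, hf0]
  field_simp
  ring
end

section
/- For every T ∈ C¹[-1,1] and every integer s ≥ 0, ∑_{r=s}^{∞} (1/π) ∫_{-1}^{1} 𝒥_r^{(1/2,-1/2)}(x) T(x) (1-x)^{1/2}(1+x)^{-1/2} dx = (1/π) ∫_{-1}^{1} 𝒥_s^{(-1/2,-1/2)}(x) T(x) (1-x)^{-1/2}(1+x)^{-1/2} dx. -/
namespace S4

open MeasureTheory Set intervalIntegral Real

lemma cos_mem_Icc (θ : ℝ) : Real.cos θ ∈ Set.Icc (-1:ℝ) 1 :=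
  ⟨Real.neg_one_le_cos θ, Real.cos_le_one θ⟩

lemma cos_image_Ioo : Real.cos '' (Set.Ioo 0 Real.pi) = Set.Ioo (-1:ℝ) 1 := by
  ext x
  constructor
  · rintro ⟨θ, hθ, rfl⟩
    have h1 : Real.cos θ < Real.cos 0 :=
      Real.strictAntiOn_cos (Set.left_mem_Icc.2 Real.pi_pos.le) ⟨hθ.1.le, hθ.2.le⟩ hθ.1
    have h2 : Real.cos Real.pi < Real.cos θ :=
      Real.strictAntiOn_cos ⟨hθ.1.le, hθ.2.le⟩ (Set.right_mem_Icc.2 Real.pi_pos.le) hθ.2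
    rw [Real.cos_zero] at h1
    rw [Real.cos_pi] at h2
    exact ⟨h2, h1⟩
  · intro hx
    refine ⟨Real.arccos x, ⟨Real.arccos_pos.2 hx.2, ?_⟩, Real.cos_arccos hx.1.le hx.2.le⟩
    rcases lt_or_eq_of_le (Real.arccos_le_pi x) with h | h
    · exact h
    · exfalso
      have : x = -1 := by
        rw [← Real.cos_arccos hx.1.le hx.2.le, h, Real.cos_pi]
      linarith [hx.1]

section pointwise

variable {θ : ℝ}

lemma sin_eq_rpow (hθ : θ ∈ Set.Ioo 0 Real.pi) :
    Real.sin θ = (1 - Real.cos θ) ^ ((1/2 : ℝ)) * (1 + Real.cos θ) ^ ((1/2 : ℝ)) := by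
  have h1 : Real.cos θ < 1 := by
    have := Real.strictAntiOn_cos (Set.left_mem_Icc.2 Real.pi_pos.le) ⟨hθ.1.le, hθ.2.le⟩ hθ.1
    simpa using this
  rw [← Real.sqrt_eq_rpow, ← Real.sqrt_eq_rpow, ← Real.sqrt_mul (by linarith),
    Real.sin_eq_sqrt_one_sub_cos_sq hθ.1.le hθ.2.le]
  congr 1
  ring

lemma key_minus (s : ℕ) (T : ℝ → ℝ) (hθ : θ ∈ Set.Ioo 0 Real.pi) :
    |(-Real.sin θ)| • (JacobiNormMinus s (Real.cos θ) * T (Real.cos θ) *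
      (1 - Real.cos θ) ^ (-(1/2) : ℝ) * (1 + Real.cos θ) ^ (-(1/2) : ℝ))
    = Real.cos (s * θ) * T (Real.cos θ) := by
  have h1 : Real.cos θ < 1 := by
    have := Real.strictAntiOn_cos (Set.left_mem_Icc.2 Real.pi_pos.le) ⟨hθ.1.le, hθ.2.le⟩ hθ.1
    simpa using this
  have h2 : -1 < Real.cos θ := by
    have := Real.strictAntiOn_cos ⟨hθ.1.le, hθ.2.le⟩ (Set.right_mem_Icc.2 Real.pi_pos.le) hθ.2
    simpa using this
  have hs0 : 0 < Real.sin θ := Real.sin_pos_of_pos_of_lt_pi hθ.1 hθ.2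
  set P := (1 - Real.cos θ) ^ ((1/2 : ℝ)) with hP
  set Q := (1 + Real.cos θ) ^ ((1/2 : ℝ)) with hQ
  have hPpos : 0 < P := Real.rpow_pos_of_pos (by linarith) _
  have hQpos : 0 < Q := Real.rpow_pos_of_pos (by linarith) _
  have hTs : JacobiNormMinus s (Real.cos θ) = Real.cos (s * θ) := by
    rw [JacobiNormMinus]
    have := Polynomial.Chebyshev.T_real_cos θ (s : ℤ)
    push_cast at this ⊢
    exact this
  rw [smul_eq_mul, abs_neg, abs_of_pos hs0, hTs, Real.rpow_neg (by linarith),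
    Real.rpow_neg (by linarith), ← hP, ← hQ, sin_eq_rpow hθ, ← hP, ← hQ]
  field_simp

lemma key_plus (k : ℕ) (T : ℝ → ℝ) (hθ : θ ∈ Set.Ioo 0 Real.pi) :
    |(-Real.sin θ)| • (JacobiNormPlus k (Real.cos θ) * T (Real.cos θ) *
      (1 - Real.cos θ) ^ ((1/2) : ℝ) * (1 + Real.cos θ) ^ (-(1/2) : ℝ))
    = (Real.cos (k * θ) - Real.cos ((k + 1) * θ)) * T (Real.cos θ) := by
  have h1 : Real.cos θ < 1 := by
    have := Real.strictAntiOn_cos (Set.left_mem_Icc.2 Real.pi_pos.le) ⟨hθ.1.le, hθ.2.le⟩ hθ.1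
    simpa using this
  have h2 : -1 < Real.cos θ := by
    have := Real.strictAntiOn_cos ⟨hθ.1.le, hθ.2.le⟩ (Set.right_mem_Icc.2 Real.pi_pos.le) hθ.2
    simpa using this
  have hs0 : 0 < Real.sin θ := Real.sin_pos_of_pos_of_lt_pi hθ.1 hθ.2
  set P := (1 - Real.cos θ) ^ ((1/2 : ℝ)) with hP
  set Q := (1 + Real.cos θ) ^ ((1/2 : ℝ)) with hQ
  have hPpos : 0 < P := Real.rpow_pos_of_pos (by linarith) _
  have hQpos : 0 < Q := Real.rpow_pos_of_pos (by linarith) _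
  have hPP : P * P = 1 - Real.cos θ := by
    rw [hP, ← Real.rpow_add (by linarith)]
    norm_num
  have hW : JacobiNormPlus k (Real.cos θ) * Real.sin θ
      = Real.sin (((k : ℝ) + 1) * θ) + Real.sin ((k : ℝ) * θ) := by
    rw [JacobiNormPlus, add_mul]
    rw [Polynomial.Chebyshev.U_real_cos θ (k : ℤ), Polynomial.Chebyshev.U_real_cos θ ((k : ℤ) - 1)]
    push_cast
    ring_nf
  have htrig : (1 - Real.cos θ) * (Real.sin (((k : ℝ) + 1) * θ) + Real.sin ((k : ℝ) * θ))
      = (Real.cos ((k : ℝ) * θ) - Real.cos (((k : ℝ) + 1) * θ)) * Real.sin θ := by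
    have e : ((k : ℝ) + 1) * θ = (k : ℝ) * θ + θ := by ring
    rw [e, Real.sin_add, Real.cos_add]
    linear_combination (-(Real.sin ((k : ℝ) * θ))) * Real.sin_sq_add_cos_sq θ
  have hWc : (1 - Real.cos θ) * JacobiNormPlus k (Real.cos θ)
      = Real.cos ((k : ℝ) * θ) - Real.cos (((k : ℝ) + 1) * θ) := by
    have h3 : ((1 - Real.cos θ) * JacobiNormPlus k (Real.cos θ)) * Real.sin θ
        = (Real.cos ((k : ℝ) * θ) - Real.cos (((k : ℝ) + 1) * θ)) * Real.sin θ := by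
      rw [mul_assoc, hW]
      exact htrig
    exact mul_right_cancel₀ hs0.ne' h3
  rw [smul_eq_mul, abs_neg, abs_of_pos hs0, Real.rpow_neg (by linarith), ← hQ,
    sin_eq_rpow hθ, ← hP, ← hQ]
  calc P * Q * (JacobiNormPlus k (Real.cos θ) * T (Real.cos θ) * P * Q⁻¹)
      = (P * P) * JacobiNormPlus k (Real.cos θ) * T (Real.cos θ) * (Q * Q⁻¹) := by ring
    _ = (P * P) * JacobiNormPlus k (Real.cos θ) * T (Real.cos θ) := by
        rw [mul_inv_cancel₀ hQpos.ne', mul_one]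
    _ = ((1 - Real.cos θ) * JacobiNormPlus k (Real.cos θ)) * T (Real.cos θ) := by
        rw [hPP]
    _ = (Real.cos (k * θ) - Real.cos ((k + 1) * θ)) * T (Real.cos θ) := by rw [hWc]

end pointwise

lemma cov (G H : ℝ → ℝ) (h : ∀ θ ∈ Set.Ioo 0 Real.pi, |(-Real.sin θ)| • G (Real.cos θ) = H θ) :
    ∫ x in (-1:ℝ)..1, G x = ∫ θ in (0:ℝ)..Real.pi, H θ := by
  rw [intervalIntegral.integral_of_le (by norm_num : (-1:ℝ) ≤ 1),
    intervalIntegral.integral_of_le Real.pi_pos.le,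
    MeasureTheory.integral_Ioc_eq_integral_Ioo, MeasureTheory.integral_Ioc_eq_integral_Ioo,
    ← cos_image_Ioo,
    MeasureTheory.integral_image_eq_integral_abs_deriv_smul measurableSet_Ioo
      (fun θ _ => (Real.hasDerivAt_cos θ).hasDerivWithinAt)
      (Real.injOn_cos.mono Set.Ioo_subset_Icc_self) G]
  exact MeasureTheory.setIntegral_congr_fun measurableSet_Ioo (fun θ hθ => h θ hθ)


lemma summable_cosint {T : ℝ → ℝ} (hT : ContDiffOn ℝ 1 T (Set.Icc (-1:ℝ) 1)) :
    Summable (fun n : ℕ => |∫ θ in (0:ℝ)..Real.pi, Real.cos (n * θ) * T (Real.cos θ)|) := by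
  haveI hfact : Fact (0 < 2 * Real.pi) := ⟨by positivity⟩
  have hπC : (Real.pi : ℂ) ≠ 0 := Complex.ofReal_ne_zero.mpr Real.pi_ne_zero
  set g : ℝ → ℝ := derivWithin T (Set.Icc (-1:ℝ) 1) with hgdef
  have huniq : UniqueDiffOn ℝ (Set.Icc (-1:ℝ) 1) := uniqueDiffOn_Icc (by norm_num)
  have hgc : ContinuousOn g (Set.Icc (-1:ℝ) 1) := hT.continuousOn_derivWithin huniq le_rfl
  have hmem : ∀ θ : ℝ, Real.cos θ ∈ Set.Icc (-1:ℝ) 1 :=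
    fun θ => ⟨Real.neg_one_le_cos θ, Real.cos_le_one θ⟩
  have hTd : ∀ x ∈ Set.Icc (-1:ℝ) 1, HasDerivWithinAt T (g x) (Set.Icc (-1:ℝ) 1) x :=
    fun x hx => (hT.differentiableOn (by norm_num) x hx).hasDerivWithinAt
  set F : ℝ → ℝ := fun θ => T (Real.cos θ) with hFdef
  set F' : ℝ → ℝ := fun θ => -Real.sin θ * g (Real.cos θ) with hF'def
  have hFd : ∀ θ, HasDerivAt F (F' θ) θ := by
    intro θ
    have := (hTd _ (hmem θ)).scomp_hasDerivAt θ (Real.hasDerivAt_cos θ) hmem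
    simpa [hFdef, hF'def, smul_eq_mul, mul_comm, Function.comp_def] using this
  have hFc : Continuous F := hT.continuousOn.comp_continuous Real.continuous_cos hmem
  have hF'c : Continuous F' :=
    (Real.continuous_sin.neg).mul (hgc.comp_continuous Real.continuous_cos hmem)
  set Fc : ℝ → ℂ := fun θ => ((F θ : ℝ) : ℂ) with hFcdef
  set F'c : ℝ → ℂ := fun θ => ((F' θ : ℝ) : ℂ) with hF'cdef
  have hFcc : Continuous Fc := Complex.continuous_ofReal.comp hFc
  have hF'cc : Continuous F'c := Complex.continuous_ofReal.comp hF'c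
  have hab : (-Real.pi) < -Real.pi + 2 * Real.pi := by linarith [Real.pi_pos]
  set d : ℤ → ℂ := fun n => fourierCoeffOn hab Fc n with hddef
  set d' : ℤ → ℂ := fun n => fourierCoeffOn hab F'c n with hd'def
  -- Step 1: integration by parts
  have hrel : ∀ n : ℤ, n ≠ 0 → ‖d n‖ = ‖d' n‖ / |(n : ℝ)| := by
    intro n hn
    have hFcd : ∀ x, HasDerivAt Fc (F'c x) x := fun x => (hFd x).ofReal_comp
    have hint : IntervalIntegrable F'c volume (-Real.pi) (-Real.pi + 2 * Real.pi) :=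
      hF'cc.intervalIntegrable _ _
    have h := fourierCoeffOn_of_hasDerivAt hab hn (fun x _ => hFcd x) hint
    have hFcb : Fc (-Real.pi + 2 * Real.pi) - Fc (-Real.pi) = 0 := by
      simp only [hFcdef, hFdef]
      rw [Real.cos_add_two_pi]
      ring
    rw [hFcb, mul_zero, zero_sub] at h
    have h2 : d n = d' n / ((n : ℂ) * Complex.I) := by
      show fourierCoeffOn hab Fc n = fourierCoeffOn hab F'c n / _
      rw [h]
      have hn' : (n : ℂ) ≠ 0 := Int.cast_ne_zero.mpr hn
      push_cast
      field_simp
      ring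
    rw [h2, norm_div, norm_mul, Complex.norm_I, mul_one, Complex.norm_intCast]
  -- Step 2: Bessel inequality for the derivative coefficients
  have hF'per : F'c (-Real.pi) = F'c (-Real.pi + 2 * Real.pi) := by
    have e : -Real.pi + 2 * Real.pi = Real.pi := by ring
    rw [e]
    simp [hF'cdef, hF'def, Real.sin_neg, Real.sin_pi]
  set G : C(AddCircle (2 * Real.pi), ℂ) :=
    ⟨AddCircle.liftIco (2 * Real.pi) (-Real.pi) F'c,
      AddCircle.liftIco_continuous hF'per hF'cc.continuousOn⟩ with hGdef
  have hGcoeff : ∀ n : ℤ, fourierCoeff (G : AddCircle (2 * Real.pi) → ℂ) n = d' n := by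
    intro n
    exact fourierCoeff_liftIco_eq F'c n
  have hbes : Summable fun n : ℤ => ‖d' n‖ ^ 2 := by
    have hm := lp.memℓp (fourierBasis.repr (ContinuousMap.toLp (E := ℂ) 2 AddCircle.haarAddCircle ℂ G))
    have hs := (memℓp_gen_iff (p := 2) (by norm_num)).1 hm
    refine hs.congr fun i => ?_
    rw [fourierBasis_repr, fourierCoeff_toLp, hGcoeff]
    norm_num
  -- Step 3: summability of ‖d n‖
  have hsd : Summable fun n : ℤ => ‖d n‖ := by
    have h1n : Summable fun n : ℤ => (1 / (n : ℝ)) ^ 2 := by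
      have := summable_one_div_int_pow.mpr (by norm_num : 1 < 2)
      exact this.congr fun n => by rw [div_pow, one_pow]
    have hite : Summable fun n : ℤ => (if n = 0 then ‖d 0‖ else 0) := by
      apply summable_of_finite_support
      refine (Set.finite_singleton (0 : ℤ)).subset ?_
      intro n hn
      simp only [Function.mem_support, ne_eq, ite_eq_right_iff, not_forall] at hn
      simpa using hn.1
    have hB : Summable fun n : ℤ =>
        (if n = 0 then ‖d 0‖ else 0) + (‖d' n‖ ^ 2 + (1 / (n : ℝ)) ^ 2) / 2 :=
      hite.add ((hbes.add h1n).div_const 2)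
    refine Summable.of_nonneg_of_le (fun n => norm_nonneg _) (fun n => ?_) hB
    by_cases hn : n = 0
    · subst hn
      simp only [if_pos rfl]
      exact le_add_of_nonneg_right (by positivity)
    · rw [if_neg hn, zero_add, hrel n hn]
      have ht : (0:ℝ) < |(n : ℝ)| := abs_pos.mpr (by exact_mod_cast hn)
      have hsq : (1 / (n : ℝ)) ^ 2 = (1 / |(n : ℝ)|) ^ 2 := by
        rw [div_pow, div_pow, one_pow, _root_.sq_abs]
      rw [hsq]
      rw [div_eq_mul_one_div ‖d' n‖ |(n : ℝ)|]
      nlinarith [sq_nonneg (‖d' n‖ - 1 / |(n : ℝ)|), ht]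
  -- Step 4: the value of the integral in terms of d
  have hval : ∀ n : ℕ,
      ((∫ θ in (0:ℝ)..Real.pi, Real.cos (n * θ) * F θ : ℝ) : ℂ) = Real.pi * d n := by
    intro n
    set u : ℝ → ℂ := fun x =>
      (fourier (-(n : ℤ)) (x : AddCircle ((-Real.pi + 2 * Real.pi) - (-Real.pi))) : ℂ) • Fc x
      with hudef
    have h0 : d (n : ℤ) = (1 / ((-Real.pi + 2 * Real.pi) - (-Real.pi))) •
        ∫ x in (-Real.pi)..(-Real.pi + 2 * Real.pi), u x :=
      fourierCoeffOn_eq_integral Fc (n : ℤ) hab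
    have hfour : ∀ y : ℝ,
        (fourier (-(n : ℤ)) (y : AddCircle ((-Real.pi + 2 * Real.pi) - (-Real.pi))) : ℂ)
        = Complex.exp ((-((n : ℝ) * y) : ℝ) * Complex.I) := by
      intro y
      rw [fourier_coe_apply]
      congr 1
      push_cast
      field_simp
      ring
    have hucont : Continuous u := by
      rw [hudef]
      exact Continuous.smul ((map_continuous (fourier (-(n:ℤ)))).comp (AddCircle.continuous_mk' _)) hFcc
    have hbound : (∫ x in (0:ℝ)..(-Real.pi + 2 * Real.pi), u x) = ∫ x in (0:ℝ)..Real.pi, u x := by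
      rw [show -Real.pi + 2 * Real.pi = Real.pi by ring]
    have hsplit : (∫ x in (-Real.pi)..(-Real.pi + 2 * Real.pi), u x)
        = ((2 * ∫ θ in (0:ℝ)..Real.pi, Real.cos (n * θ) * F θ : ℝ) : ℂ) := by
      have hneg : (∫ x in (-Real.pi)..(0:ℝ), u x) = ∫ x in (0:ℝ)..Real.pi, u (-x) := by
        have := intervalIntegral.integral_comp_neg (a := 0) (b := Real.pi) (f := u)
        rw [neg_zero] at this
        rw [this]
      calc (∫ x in (-Real.pi)..(-Real.pi + 2 * Real.pi), u x)
          = (∫ x in (-Real.pi)..(0:ℝ), u x) + ∫ x in (0:ℝ)..(-Real.pi + 2 * Real.pi), u x :=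
            (intervalIntegral.integral_add_adjacent_intervals
              (hucont.intervalIntegrable _ _) (hucont.intervalIntegrable _ _)).symm
        _ = (∫ x in (0:ℝ)..Real.pi, u (-x)) + ∫ x in (0:ℝ)..Real.pi, u x := by
            rw [hneg, hbound]
        _ = ∫ x in (0:ℝ)..Real.pi, (u (-x) + u x) :=
            (intervalIntegral.integral_add
              ((hucont.comp continuous_neg).intervalIntegrable _ _)
              (hucont.intervalIntegrable _ _)).symm
        _ = ∫ x in (0:ℝ)..Real.pi, ((2 * Real.cos (n * x) * F x : ℝ) : ℂ) := by
            apply intervalIntegral.integral_congr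
            intro x _
            have hFcneg : Fc (-x) = Fc x := by
              simp [hFcdef, hFdef, Real.cos_neg]
            simp only [hudef, hfour, hFcneg, smul_eq_mul]
            rw [show (-((n : ℝ) * -x) : ℝ) = (n : ℝ) * x by ring]
            rw [Complex.exp_mul_I, Complex.exp_mul_I]
            push_cast [Complex.ofReal_cos, Complex.ofReal_sin]
            rw [Complex.cos_neg, Complex.sin_neg]
            ring
        _ = ((∫ x in (0:ℝ)..Real.pi, 2 * Real.cos (n * x) * F x : ℝ) : ℂ) :=
            intervalIntegral.integral_ofReal
        _ = ((2 * ∫ θ in (0:ℝ)..Real.pi, Real.cos (n * θ) * F θ : ℝ) : ℂ) := by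
            norm_cast
            simp only [mul_assoc]
            rw [intervalIntegral.integral_const_mul]
    rw [h0, hsplit, Complex.real_smul]
    push_cast
    field_simp
    ring
  -- Conclusion
  have hnat : Summable fun n : ℕ => ‖d (n : ℤ)‖ :=
    hsd.comp_injective (fun a b h => by exact_mod_cast h)
  refine ((hnat.mul_left Real.pi).congr fun n => ?_)
  have h := hval n
  have : |∫ θ in (0:ℝ)..Real.pi, Real.cos (n * θ) * F θ| = Real.pi * ‖d n‖ := by
    calc |∫ θ in (0:ℝ)..Real.pi, Real.cos (n * θ) * F θ|
        = ‖((∫ θ in (0:ℝ)..Real.pi, Real.cos (n * θ) * F θ : ℝ) : ℂ)‖ := by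
          rw [Complex.norm_real]; rfl
      _ = ‖(Real.pi : ℂ) * d n‖ := by rw [h]
      _ = Real.pi * ‖d n‖ := by
          rw [norm_mul, Complex.norm_real, Real.norm_eq_abs, abs_of_pos Real.pi_pos]
  exact this.symm


end S4

/-- for every `T ∈ C¹[-1,1]` and every `s ≥ 0`,
`∑_{r=s}^{∞} (1/π) ∫_{-1}^{1} 𝒥_r^{(1/2,-1/2)}(x) T(x) (1-x)^{1/2}(1+x)^{-1/2} dx
 = (1/π) ∫_{-1}^{1} 𝒥_s^{(-1/2,-1/2)}(x) T(x) (1-x)^{-1/2}(1+x)^{-1/2} dx`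
(the weight `W^{(1/2,-1/2)}(r) = 1` for all `r`). -/
theorem statement4 (T : ℝ → ℝ) (hT : ContDiffOn ℝ 1 T (Set.Icc (-1 : ℝ) 1)) (s : ℕ) :
    (∑' r : ℕ,
      (1 / Real.pi) *
        ∫ x in (-1 : ℝ)..1,
          JacobiNormPlus (s + r) x * T x * (1 - x) ^ ((1/2) : ℝ) * (1 + x) ^ (-(1/2) : ℝ))
    = (1 / Real.pi) *
        ∫ x in (-1 : ℝ)..1,
          JacobiNormMinus s x * T x * (1 - x) ^ (-(1/2) : ℝ) * (1 + x) ^ (-(1/2) : ℝ) := by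
  classical
  set c : ℕ → ℝ := fun n => ∫ θ in (0:ℝ)..Real.pi, Real.cos (n * θ) * T (Real.cos θ) with hc
  have hsum : Summable c := summable_abs_iff.mp (S4.summable_cosint hT)
  have hmem : ∀ θ : ℝ, Real.cos θ ∈ Set.Icc (-1:ℝ) 1 :=
    fun θ => ⟨Real.neg_one_le_cos θ, Real.cos_le_one θ⟩
  have hcont : ∀ a : ℝ, Continuous fun θ => Real.cos (a * θ) * T (Real.cos θ) := by
    intro a
    exact (Real.continuous_cos.comp (continuous_const.mul continuous_id)).mul
      (hT.continuousOn.comp_continuous Real.continuous_cos hmem)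
  -- evaluation of the integrals via the substitution x = cos θ
  have hplus : ∀ k : ℕ,
      (∫ x in (-1:ℝ)..1, JacobiNormPlus k x * T x * (1-x) ^ ((1/2) : ℝ) * (1+x) ^ (-(1/2) : ℝ))
        = c k - c (k+1) := by
    intro k
    rw [S4.cov (fun x => JacobiNormPlus k x * T x * (1-x) ^ ((1/2) : ℝ) * (1+x) ^ (-(1/2) : ℝ))
      (fun θ => (Real.cos (k * θ) - Real.cos ((k + 1) * θ)) * T (Real.cos θ))
      (fun θ hθ => S4.key_plus k T hθ)]
    have e1 : (∫ θ in (0:ℝ)..Real.pi, (Real.cos (k * θ) - Real.cos ((k + 1) * θ)) * T (Real.cos θ))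
        = (∫ θ in (0:ℝ)..Real.pi, Real.cos ((k:ℝ) * θ) * T (Real.cos θ)
            - Real.cos (((k:ℝ) + 1) * θ) * T (Real.cos θ)) := by
      apply intervalIntegral.integral_congr
      intro θ _
      ring
    rw [e1, intervalIntegral.integral_sub ((hcont k).intervalIntegrable _ _)
      ((hcont ((k:ℝ)+1)).intervalIntegrable _ _)]
    have e2 : c (k+1) = ∫ θ in (0:ℝ)..Real.pi, Real.cos (((k:ℝ) + 1) * θ) * T (Real.cos θ) := by
      rw [hc]
      apply intervalIntegral.integral_congr
      intro θ _
      norm_num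
    rw [e2, hc]
  have hminus :
      (∫ x in (-1:ℝ)..1, JacobiNormMinus s x * T x * (1-x) ^ (-(1/2) : ℝ) * (1+x) ^ (-(1/2) : ℝ))
        = c s := by
    rw [S4.cov (fun x => JacobiNormMinus s x * T x * (1-x) ^ (-(1/2) : ℝ) * (1+x) ^ (-(1/2) : ℝ))
      (fun θ => Real.cos (s * θ) * T (Real.cos θ))
      (fun θ hθ => S4.key_minus s T hθ), hc]
  -- telescoping
  have h1 : Summable (fun r : ℕ => c (s + r)) :=
    ((summable_nat_add_iff (f := c) s).2 hsum).congr (fun r => by rw [add_comm])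
  have h2 : Summable (fun r : ℕ => c (s + r + 1)) :=
    ((summable_nat_add_iff (f := c) (s+1)).2 hsum).congr
      (fun r => congrArg c (by omega))
  have htel : (∑' r : ℕ, (c (s + r) - c (s + r + 1))) = c s := by
    rw [Summable.tsum_sub h1 h2]
    have h3 : (∑' r : ℕ, c (s + r)) = c (s + 0) + ∑' r : ℕ, c (s + (r + 1)) := by
      rw [Summable.tsum_eq_zero_add h1]
    have h4 : (∑' r : ℕ, c (s + (r + 1))) = ∑' r : ℕ, c (s + r + 1) :=
      tsum_congr (fun r => congrArg c (by omega))
    rw [h3, h4]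
    norm_num
  calc (∑' r : ℕ, (1 / Real.pi) *
        ∫ x in (-1 : ℝ)..1,
          JacobiNormPlus (s + r) x * T x * (1 - x) ^ ((1/2) : ℝ) * (1 + x) ^ (-(1/2) : ℝ))
      = ∑' r : ℕ, (1 / Real.pi) * (c (s + r) - c (s + r + 1)) :=
        tsum_congr (fun r => by rw [hplus (s + r)])
    _ = (1 / Real.pi) * ∑' r : ℕ, (c (s + r) - c (s + r + 1)) := tsum_mul_left
    _ = (1 / Real.pi) * c s := by rw [htel]
    _ = (1 / Real.pi) *
        ∫ x in (-1 : ℝ)..1,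
          JacobiNormMinus s x * T x * (1 - x) ^ (-(1/2) : ℝ) * (1 + x) ^ (-(1/2) : ℝ) := by
        rw [hminus]
end
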